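/- arXiv:1105.1706 — 5 statements merged into one kernel-verified Lean document; each statement's English description precedes it below -/
import Mathlib

section
/- In the polynomial ring ℚ[A,B,λ,μ] the following two identities hold, where c₄ denotes c₄(A,B) and c₆ denotes c₆(A,B): c₄(λA − μ·∂D/∂B, λB + μ·∂D/∂A) = c₄λ⁴ + 4c₆λ³μ + 6c₄²λ²μ² + 4c₄c₆λμ³ − (3c₄³ − 4c₆²)μ⁴, and c₆(λA − μ·∂D/∂B, λB + μ·∂D/∂A) = c₆λ⁶ + 6c₄²λ⁵μ + 15c₄c₆λ⁴μ² + 20c₆²λ³μ³ + 15c₄²c₆λ²μ⁴ + 6(3c₄⁴ − 2c₄c₆²)λμ⁵ + (9c₄³c₆ − 8c₆³)μ⁶. (This is the computational content of the formula, due to Rubin–Silverberg and re-proved in the paper, for the family of elliptic curves parametrised by Y_E(3): the elliptic curves directly 3-congruent to y² = x³ − 27c₄x − 54c₆ are y² = x³ − 27𝐜₄(λ,μ)x − 54𝐜₆(λ,μ) with 𝐜₄, 𝐜₆ the right-hand sides above.) -/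
open MvPolynomial

noncomputable section

/-- The polynomial ring ℚ[A,B,λ,μ]. -/
abbrev R1 : Type := MvPolynomial (Fin 4) ℚ

/-- The binary form c₄(X,Y) = −216X³Y + Y⁴, as a function of two polynomial arguments. -/
def c4bin (A B : R1) : R1 := -216 * A ^ 3 * B + B ^ 4
/-- The binary form c₆(X,Y) = 5832X⁶ − 540X³Y³ − Y⁶. -/
def c6bin (A B : R1) : R1 := 5832 * A ^ 6 - 540 * A ^ 3 * B ^ 3 - B ^ 6
/-- ∂D/∂A = −108A³ − B³, for D(A,B) = −27A⁴ − AB³. -/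
def dDdA (A B : R1) : R1 := -108 * A ^ 3 - B ^ 3
/-- ∂D/∂B = −3AB². -/
def dDdB (A B : R1) : R1 := -3 * A * B ^ 2

theorem c4bin_covariant_pencil (a b l m : R1) :
    c4bin (l * a - m * dDdB a b) (l * b + m * dDdA a b) =
      c4bin a b * l ^ 4 + 4 * c6bin a b * l ^ 3 * m + 6 * c4bin a b ^ 2 * l ^ 2 * m ^ 2
        + 4 * c4bin a b * c6bin a b * l * m ^ 3
        - (3 * c4bin a b ^ 3 - 4 * c6bin a b ^ 2) * m ^ 4 := by
  unfold c4bin c6bin dDdA dDdB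
  ring

theorem c6bin_covariant_pencil (a b l m : R1) :
    c6bin (l * a - m * dDdB a b) (l * b + m * dDdA a b) =
      c6bin a b * l ^ 6 + 6 * c4bin a b ^ 2 * l ^ 5 * m
        + 15 * c4bin a b * c6bin a b * l ^ 4 * m ^ 2 + 20 * c6bin a b ^ 2 * l ^ 3 * m ^ 3
        + 15 * c4bin a b ^ 2 * c6bin a b * l ^ 2 * m ^ 4
        + 6 * (3 * c4bin a b ^ 4 - 2 * c4bin a b * c6bin a b ^ 2) * l * m ^ 5
        + (9 * c4bin a b ^ 3 * c6bin a b - 8 * c6bin a b ^ 3) * m ^ 6 := by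
  unfold c4bin c6bin dDdA dDdB
  ring

/-- The two identities giving the family of elliptic curves parametrised by Y_E(3):
c₄ and c₆ evaluated at (λA − μ·∂D/∂B, λB + μ·∂D/∂A) agree with the Rubin–Silverberg
binary forms 𝐜₄(λ,μ) and 𝐜₆(λ,μ). -/
theorem stmt1 :
    (c4bin (X 2 * X 0 - X 3 * dDdB (X 0) (X 1)) (X 2 * X 1 + X 3 * dDdA (X 0) (X 1)) =
      c4bin (X 0) (X 1) * X 2 ^ 4
        + 4 * c6bin (X 0) (X 1) * X 2 ^ 3 * X 3
        + 6 * c4bin (X 0) (X 1) ^ 2 * X 2 ^ 2 * X 3 ^ 2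
        + 4 * c4bin (X 0) (X 1) * c6bin (X 0) (X 1) * X 2 * X 3 ^ 3
        - (3 * c4bin (X 0) (X 1) ^ 3 - 4 * c6bin (X 0) (X 1) ^ 2) * X 3 ^ 4)
    ∧
    (c6bin (X 2 * X 0 - X 3 * dDdB (X 0) (X 1)) (X 2 * X 1 + X 3 * dDdA (X 0) (X 1)) =
      c6bin (X 0) (X 1) * X 2 ^ 6
        + 6 * c4bin (X 0) (X 1) ^ 2 * X 2 ^ 5 * X 3
        + 15 * c4bin (X 0) (X 1) * c6bin (X 0) (X 1) * X 2 ^ 4 * X 3 ^ 2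
        + 20 * c6bin (X 0) (X 1) ^ 2 * X 2 ^ 3 * X 3 ^ 3
        + 15 * c4bin (X 0) (X 1) ^ 2 * c6bin (X 0) (X 1) * X 2 ^ 2 * X 3 ^ 4
        + 6 * (3 * c4bin (X 0) (X 1) ^ 4 - 2 * c4bin (X 0) (X 1) * c6bin (X 0) (X 1) ^ 2)
            * X 2 * X 3 ^ 5
        + (9 * c4bin (X 0) (X 1) ^ 3 * c6bin (X 0) (X 1) - 8 * c6bin (X 0) (X 1) ^ 3)
            * X 3 ^ 6) :=
  ⟨c4bin_covariant_pencil _ _ _ _, c6bin_covariant_pencil _ _ _ _⟩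

end
end

section
/- Each of the four polynomials F, H, c₄, c₆ ∈ ℂ[a,b,c] is invariant under both generators of the group G ≅ PSL₂(𝔽₇): writing P∘M for the polynomial obtained from P by the linear substitution (a,b,c)ᵀ ↦ M·(a,b,c)ᵀ, one has P∘ρS = P and P∘ρT = P for P ∈ {F, H, c₄, c₆}, where ρT = diag(ζ, ζ⁴, ζ²) and ρS = g₇⁻¹·[[ζ−ζ⁶, ζ²−ζ⁵, ζ⁴−ζ³], [ζ²−ζ⁵, ζ⁴−ζ³, ζ−ζ⁶], [ζ⁴−ζ³, ζ−ζ⁶, ζ²−ζ⁵]]. -/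
open MvPolynomial

noncomputable section

/-- The polynomial ring ℂ[a,b,c]. -/
abbrev RC : Type := MvPolynomial (Fin 3) ℂ

/-- The Klein quartic F = a³b + b³c + c³a. -/
def FC : RC := X 0 ^ 3 * X 1 + X 1 ^ 3 * X 2 + X 2 ^ 3 * X 0

/-- The 3×3 Hessian matrix of a polynomial in ℂ[a,b,c]. -/
def hessC (p : RC) : Matrix (Fin 3) (Fin 3) RC :=
  Matrix.of fun i j => pderiv i (pderiv j p)

/-- The gradient of a polynomial in ℂ[a,b,c]. -/
def gradC (p : RC) : Fin 3 → RC := fun i => pderiv i p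

/-- H = (−1/54)·det(Hessian of F). -/
def HC : RC := C (-1/54 : ℂ) * (hessC FC).det

/-- The 4×4 bordered Hessian matrix of F and H. -/
def M4C : Matrix (Fin 4) (Fin 4) RC :=
  Matrix.of fun i j =>
    if hi : (i : ℕ) < 3 then
      if hj : (j : ℕ) < 3 then hessC FC ⟨i, hi⟩ ⟨j, hj⟩ else gradC HC ⟨i, hi⟩
    else
      if hj : (j : ℕ) < 3 then gradC HC ⟨j, hj⟩ else 0

/-- c₄ = (1/9)·det M₄. -/
def c4C : RC := C (1/9 : ℂ) * M4C.det

/-- c₆ = (1/14)·det of the Jacobian matrix with rows ∇F, ∇H, ∇c₄. -/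
def c6C : RC := C (1/14 : ℂ) * (Matrix.of ![gradC FC, gradC HC, gradC c4C]).det

/-- The linear substitution P ∘ M : replace (a,b,c)ᵀ by M·(a,b,c)ᵀ. -/
def substC (M : Matrix (Fin 3) (Fin 3) ℂ) (p : RC) : RC :=
  aeval (fun i => ∑ j : Fin 3, C (M i j) * X j) p

/-- The image ρ(S) of S = [[0,1],[−1,0]] under the 3-dimensional representation. -/
def rhoS (ζ : ℂ) : Matrix (Fin 3) (Fin 3) ℂ :=
  (1 + 2 * (ζ ^ 3 + ζ ^ 5 + ζ ^ 6))⁻¹ •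
    Matrix.of ![![ζ - ζ ^ 6, ζ ^ 2 - ζ ^ 5, ζ ^ 4 - ζ ^ 3],
                ![ζ ^ 2 - ζ ^ 5, ζ ^ 4 - ζ ^ 3, ζ - ζ ^ 6],
                ![ζ ^ 4 - ζ ^ 3, ζ - ζ ^ 6, ζ ^ 2 - ζ ^ 5]]

/-- The image ρ(T) of T = [[1,1],[0,1]] : the diagonal matrix diag(ζ, ζ⁴, ζ²). -/
def rhoT (ζ : ℂ) : Matrix (Fin 3) (Fin 3) ℂ :=
  Matrix.diagonal ![ζ, ζ ^ 4, ζ ^ 2]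

/-!
A linear substitution `x ↦ M x` transforms gradients, Hessians and Jacobians covariantly:
`∇(p ∘ M) = Mᵀ (∇p ∘ M)` and `Hess(p ∘ M) = Mᵀ (Hess p ∘ M) M`. Hence once `F` is invariant
under a matrix of determinant one, so is `H` (a Hessian determinant), then `c₄` (a bordered
Hessian determinant of `F` and `H`), then `c₆` (the Jacobian determinant of `F, H, c₄`).
It remains to check that `F` is invariant under `ρT` and `ρS` and that both have determinant
one, which are finite computations in `ℚ(ζ)`.
-/

open Matrix

namespace MvPolynomial

theorem pderiv_aeval {R σ τ : Type*} [CommSemiring R] [Fintype σ] [DecidableEq σ]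
    (f : σ → MvPolynomial τ R) (i : τ) (p : MvPolynomial σ R) :
    pderiv i (aeval f p) = ∑ j, pderiv i (f j) * aeval f (pderiv j p) := by
  induction p using MvPolynomial.induction_on with
  | C a => simp
  | add p q hp hq => simp only [map_add, hp, hq, mul_add, Finset.sum_add_distrib]
  | mul_X p k hp =>
    simp only [map_mul, aeval_X, Derivation.leibniz, hp, pderiv_X, Pi.single_apply, smul_eq_mul,
      mul_add, mul_one, mul_ite, mul_zero, map_add, Finset.sum_add_distrib, apply_ite (aeval f),
      map_zero, Finset.sum_ite_eq, Finset.mem_univ, if_true, Finset.mul_sum]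
    ring_nf

variable {R σ ι : Type*} [CommRing R] [Fintype σ]

noncomputable def linearSubst (M : Matrix σ σ R) : MvPolynomial σ R →ₐ[R] MvPolynomial σ R :=
  aeval fun i => ∑ j, C (M i j) * X j

theorem linearSubst_C (M : Matrix σ σ R) (a : R) : linearSubst M (C a) = C a :=
  aeval_C _ a

theorem eval_linearSubst (M : Matrix σ σ R) (x : σ → R) (p : MvPolynomial σ R) :
    eval x (linearSubst M p) = eval (M *ᵥ x) p := by
  rw [linearSubst, aeval_eq_bind₁]
  change eval₂Hom (RingHom.id R) x _ = _
  rw [eval₂Hom_bind₁]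
  congr 1
  ext i <;> simp [mulVec, dotProduct]

noncomputable def jacobian (P : ι → MvPolynomial σ R) : Matrix ι σ (MvPolynomial σ R) :=
  of fun k i => pderiv i (P k)

noncomputable def hessian (p : MvPolynomial σ R) : Matrix σ σ (MvPolynomial σ R) :=
  of fun i j => pderiv i (pderiv j p)

noncomputable def borderedHessian (p q : MvPolynomial σ R) :
    Matrix (σ ⊕ Fin 1) (σ ⊕ Fin 1) (MvPolynomial σ R) :=
  fromBlocks (hessian p) (jacobian fun _ => q)ᵀ (jacobian fun _ => q) 0

variable [DecidableEq σ] {M : Matrix σ σ R}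

theorem det_map_C (M : Matrix σ σ R) : (M.map (C : R →+* MvPolynomial σ R)).det = C M.det :=
  (RingHom.map_det C M).symm

theorem pderiv_linearSubst (M : Matrix σ σ R) (i : σ) (p : MvPolynomial σ R) :
    pderiv i (linearSubst M p) = ∑ j, C (M j i) * linearSubst M (pderiv j p) := by
  rw [linearSubst, pderiv_aeval]
  simp [pderiv_X, Pi.single_apply]

theorem hessian_linearSubst (M : Matrix σ σ R) (p : MvPolynomial σ R) :
    hessian (linearSubst M p) = (M.map (C : R →+* MvPolynomial σ R))ᵀ *
      (hessian p).map (linearSubst M) * M.map (C : R →+* MvPolynomial σ R) := by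
  refine Matrix.ext fun i j => ?_
  simp only [hessian, of_apply, pderiv_linearSubst, map_sum, Derivation.leibniz, pderiv_C,
    mul_zero, add_zero, smul_eq_mul, mul_apply, map_apply, transpose_apply, Finset.sum_mul,
    Finset.mul_sum]
  exact Finset.sum_congr rfl fun _ _ => Finset.sum_congr rfl fun _ _ => by ring

theorem jacobian_eq_of_linearSubst_eq {P : ι → MvPolynomial σ R}
    (hP : ∀ k, linearSubst M (P k) = P k) :
    jacobian P = (jacobian P).map (linearSubst M) * M.map (C : R →+* MvPolynomial σ R) := by
  refine Matrix.ext fun k i => ?_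
  conv_lhs => rw [jacobian, of_apply, ← hP k, pderiv_linearSubst]
  rw [mul_apply]
  exact Finset.sum_congr rfl fun _ _ => mul_comm _ _

theorem hessian_eq_of_linearSubst_eq {p : MvPolynomial σ R} (hp : linearSubst M p = p) :
    hessian p = (M.map (C : R →+* MvPolynomial σ R))ᵀ *
      (hessian p).map (linearSubst M) * M.map (C : R →+* MvPolynomial σ R) := by
  conv_lhs => rw [← hp, hessian_linearSubst]

theorem borderedHessian_eq_of_linearSubst_eq {p q : MvPolynomial σ R}
    (hp : linearSubst M p = p) (hq : linearSubst M q = q) :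
    borderedHessian p q = (fromBlocks (M.map (C : R →+* MvPolynomial σ R)) 0 0 1)ᵀ *
      (borderedHessian p q).map (linearSubst M) *
        fromBlocks (M.map (C : R →+* MvPolynomial σ R)) 0 0 1 := by
  rw [borderedHessian, fromBlocks_map, fromBlocks_transpose, fromBlocks_multiply,
    fromBlocks_multiply]
  simp only [transpose_zero, transpose_one, Matrix.map_zero _ (map_zero _), Matrix.zero_mul,
    Matrix.mul_zero, Matrix.one_mul, Matrix.mul_one, add_zero, zero_add]
  congr 1
  · exact hessian_eq_of_linearSubst_eq hp
  · conv_lhs => rw [jacobian_eq_of_linearSubst_eq (M := M) fun _ => hq]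
    rw [transpose_mul, transpose_map]
  · exact jacobian_eq_of_linearSubst_eq fun _ => hq

theorem linearSubst_det_jacobian {P : σ → MvPolynomial σ R}
    (hP : ∀ k, linearSubst M (P k) = P k) (hM : M.det = 1) :
    linearSubst M (jacobian P).det = (jacobian P).det := by
  conv_rhs => rw [jacobian_eq_of_linearSubst_eq hP]
  rw [AlgHom.map_det, det_mul, det_map_C, hM, map_one, mul_one]
  rfl

theorem linearSubst_det_hessian {p : MvPolynomial σ R} (hp : linearSubst M p = p)
    (hM : M.det = 1) : linearSubst M (hessian p).det = (hessian p).det := by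
  conv_rhs => rw [hessian_eq_of_linearSubst_eq hp]
  rw [AlgHom.map_det, det_mul, det_mul, det_transpose, det_map_C, hM, map_one, one_mul, mul_one]
  rfl

theorem linearSubst_det_borderedHessian {p q : MvPolynomial σ R} (hp : linearSubst M p = p)
    (hq : linearSubst M q = q) (hM : M.det = 1) :
    linearSubst M (borderedHessian p q).det = (borderedHessian p q).det := by
  conv_rhs => rw [borderedHessian_eq_of_linearSubst_eq hp hq]
  rw [AlgHom.map_det, det_mul, det_mul, det_transpose, det_fromBlocks_zero₂₁, det_one, mul_one,
    det_map_C, hM, map_one, one_mul, mul_one]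
  rfl

end MvPolynomial

section Heptagonal

variable {K : Type*} [CommRing K] {ζ : K}

def kleinQuartic (x : Fin 3 → K) : K := x 0 ^ 3 * x 1 + x 1 ^ 3 * x 2 + x 2 ^ 3 * x 0

theorem kleinQuartic_smul (c : K) (x : Fin 3 → K) :
    kleinQuartic (c • x) = c ^ 4 * kleinQuartic x := by
  simp only [kleinQuartic, Pi.smul_apply, smul_eq_mul]
  ring

theorem kleinQuartic_diagonal_mulVec (h7 : ζ ^ 7 = 1) (x : Fin 3 → K) :
    kleinQuartic (diagonal ![ζ, ζ ^ 4, ζ ^ 2] *ᵥ x) = kleinQuartic x := by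
  simp only [kleinQuartic, mulVec_diagonal, cons_val_zero, cons_val_one, cons_val_two,
    head_cons, tail_cons]
  have h14 : ζ ^ 14 = 1 := by rw [show 14 = 7 * 2 from rfl, pow_mul, h7, one_pow]
  linear_combination (x 0 ^ 3 * x 1 + x 2 ^ 3 * x 0) * h7 + x 1 ^ 3 * x 2 * h14

/-- Minus the quadratic Gauss sum `∑ₖ (k/7) ζᵏ`; its square is therefore `-7`. -/
def g7 (ζ : K) : K := 1 + 2 * (ζ ^ 3 + ζ ^ 5 + ζ ^ 6)

def unscaledRhoS (ζ : K) : Matrix (Fin 3) (Fin 3) K :=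
  of ![![ζ - ζ ^ 6, ζ ^ 2 - ζ ^ 5, ζ ^ 4 - ζ ^ 3],
       ![ζ ^ 2 - ζ ^ 5, ζ ^ 4 - ζ ^ 3, ζ - ζ ^ 6],
       ![ζ ^ 4 - ζ ^ 3, ζ - ζ ^ 6, ζ ^ 2 - ζ ^ 5]]

variable [IsDomain K] (hζ : IsPrimitiveRoot ζ 7)
include hζ

theorem IsPrimitiveRoot.pow_six_eq_of_seven :
    ζ ^ 6 = -(ζ ^ 5 + ζ ^ 4 + ζ ^ 3 + ζ ^ 2 + ζ + 1) := by
  have h := hζ.geom_sum_eq_zero (by norm_num)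
  simp only [Finset.sum_range_succ, Finset.sum_range_zero] at h
  linear_combination h

/- The three identities below are checked by the same reduction: after expanding, reduce the
exponents of `ζ` modulo 7 and eliminate `ζ⁶` by the cyclotomic relation; both sides then
normalize to the same expression in `1, ζ, …, ζ⁵`. -/

theorem g7_sq : g7 ζ ^ 2 = -7 := by
  have h7 : ∀ n, 7 ≤ n → ζ ^ n = ζ ^ (n % 7) := fun n _ => pow_eq_pow_mod n hζ.pow_eq_one
  rw [g7]
  ring_nf
  simp (disch := omega) only [h7]
  ring_nf
  simp only [hζ.pow_six_eq_of_seven]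
  ring_nf

theorem det_unscaledRhoS : (unscaledRhoS ζ).det = -7 * g7 ζ := by
  have h7 : ∀ n, 7 ≤ n → ζ ^ n = ζ ^ (n % 7) := fun n _ => pow_eq_pow_mod n hζ.pow_eq_one
  simp only [unscaledRhoS, det_fin_three, of_apply, cons_val', cons_val_zero, cons_val_fin_one,
    cons_val_one, cons_val, g7]
  ring_nf
  simp (disch := omega) only [h7]
  ring_nf
  simp only [hζ.pow_six_eq_of_seven]
  ring_nf

set_option maxRecDepth 10000 in
theorem kleinQuartic_unscaledRhoS_mulVec (x : Fin 3 → K) :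
    kleinQuartic (unscaledRhoS ζ *ᵥ x) = 49 * kleinQuartic x := by
  have h7 : ∀ n, 7 ≤ n → ζ ^ n = ζ ^ (n % 7) := fun n _ => pow_eq_pow_mod n hζ.pow_eq_one
  simp only [kleinQuartic, mulVec, dotProduct, unscaledRhoS, of_apply, cons_val',
    cons_val_fin_one, cons_val_zero, Fin.sum_univ_three, cons_val_one, cons_val]
  ring_nf
  simp (disch := omega) only [h7]
  ring_nf
  simp only [hζ.pow_six_eq_of_seven]
  ring_nf

end Heptagonal

theorem substC_eq_linearSubst (M : Matrix (Fin 3) (Fin 3) ℂ) : substC M = linearSubst M := rfl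

theorem eval_FC (x : Fin 3 → ℂ) : eval x FC = kleinQuartic x := by
  simp [FC, kleinQuartic]

theorem rhoS_eq_smul (ζ : ℂ) : rhoS ζ = (g7 ζ)⁻¹ • unscaledRhoS ζ := rfl

section Generators

variable {ζ : ℂ} (hζ : IsPrimitiveRoot ζ 7)
include hζ

theorem g7_ne_zero : g7 ζ ≠ 0 := fun h => by
  simpa [h] using g7_sq hζ

theorem det_rhoS : (rhoS ζ).det = 1 := by
  rw [rhoS_eq_smul, det_smul, Fintype.card_fin, det_unscaledRhoS hζ, ← g7_sq hζ, ← pow_succ,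
    inv_pow, inv_mul_cancel₀ (pow_ne_zero _ (g7_ne_zero hζ))]

theorem det_rhoT : (rhoT ζ).det = 1 := by
  rw [rhoT, det_diagonal, Fin.prod_univ_three]
  simp only [cons_val_zero, cons_val_one, cons_val_two, head_cons, tail_cons]
  linear_combination hζ.pow_eq_one

theorem linearSubst_rhoS_FC : linearSubst (rhoS ζ) FC = FC := by
  have hg4 : g7 ζ ^ 4 = 49 := by rw [show 4 = 2 * 2 from rfl, pow_mul, g7_sq hζ]; norm_num
  refine MvPolynomial.funext fun x => ?_
  rw [eval_linearSubst, eval_FC, eval_FC, rhoS_eq_smul, smul_mulVec, kleinQuartic_smul,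
    kleinQuartic_unscaledRhoS_mulVec hζ, ← hg4, inv_pow,
    inv_mul_cancel_left₀ (pow_ne_zero _ (g7_ne_zero hζ))]

theorem linearSubst_rhoT_FC : linearSubst (rhoT ζ) FC = FC := by
  refine MvPolynomial.funext fun x => ?_
  rw [eval_linearSubst, eval_FC, eval_FC, rhoT, kleinQuartic_diagonal_mulVec hζ.pow_eq_one]

end Generators

theorem M4C_eq_reindex_borderedHessian :
    M4C = reindex finSumFinEquiv finSumFinEquiv (borderedHessian FC HC) := by
  ext i j
  fin_cases i <;> fin_cases j <;> rfl

theorem of_gradC_eq_jacobian :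
    of ![gradC FC, gradC HC, gradC c4C] = jacobian ![FC, HC, c4C] := by
  ext i j
  fin_cases i <;> rfl

theorem linearSubst_eq_self_of_FC {M : Matrix (Fin 3) (Fin 3) ℂ}
    (hF : linearSubst M FC = FC) (hM : M.det = 1) :
    ∀ P ∈ ({FC, HC, c4C, c6C} : Set RC), linearSubst M P = P := by
  have hH : linearSubst M HC = HC := by
    rw [HC, map_mul, linearSubst_C, show hessC FC = hessian FC from rfl,
      linearSubst_det_hessian hF hM]
  have hc4 : linearSubst M c4C = c4C := by
    rw [c4C, map_mul, linearSubst_C, M4C_eq_reindex_borderedHessian, det_reindex_self,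
      linearSubst_det_borderedHessian hF hH hM]
  have hc6 : linearSubst M c6C = c6C := by
    have hP : ∀ k, linearSubst M (![FC, HC, c4C] k) = ![FC, HC, c4C] k := by
      intro k
      fin_cases k
      exacts [hF, hH, hc4]
    rw [c6C, map_mul, linearSubst_C, of_gradC_eq_jacobian, linearSubst_det_jacobian hP hM]
  rintro P (rfl | rfl | rfl | rfl)
  exacts [hF, hH, hc4, hc6]

/-- Each of F, H, c₄, c₆ is invariant under both generators ρ(S) and ρ(T) of
the group G ≅ PSL₂(𝔽₇). -/
theorem stmt7 (ζ : ℂ) (hζ : IsPrimitiveRoot ζ 7) :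
    ∀ P ∈ ({FC, HC, c4C, c6C} : Set RC),
      substC (rhoS ζ) P = P ∧ substC (rhoT ζ) P = P := by
  intro P hP
  rw [substC_eq_linearSubst, substC_eq_linearSubst]
  exact ⟨linearSubst_eq_self_of_FC (linearSubst_rhoS_FC hζ) (det_rhoS hζ) P hP,
    linearSubst_eq_self_of_FC (linearSubst_rhoT_FC hζ) (det_rhoT hζ) P hP⟩

end
end

section
/- Let K be an algebraically closed field of characteristic 0 and let ω ∈ K satisfy ω² + ω + 1 = 0. For every nonzero vector (a,b,c,d) ∈ K⁴, the four equations (a²b + b²c + c²a)d = 0, bc³ − ba³ − cd³ = 0, ab³ − ac³ − bd³ = 0, ca³ − cb³ − ad³ = 0 hold simultaneously if and only if either (a²b + b²c + c²a = 0 and ab² + bc² + ca² = d³), or (a,b,c,d) is a scalar multiple of one of the four points (0,0,0,1), (1,1,1,0), (1,ω,ω²,0), (1,ω²,ω,0). (That is, the variety Z(9) defined by the rank ≤ 2 / Pfaffian conditions is the union of the curve X(9) = {a²b+b²c+c²a = 0, ab²+bc²+ca² = d³} ⊂ ℙ³ and four isolated points.) -/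
/-!
Write `P = a²b + b²c + c²a` and `E = ab² + bc² + ca² - d³`. The three cubic equations are
exactly `cE = aP`, `bE = cP`, `aE = bP`, and the first one is `Pd = 0`. If `P = 0`, then
`E • (a, b, c) = 0`, which gives the curve or the point `(0 : 0 : 0 : 1)`. If `P ≠ 0`, then
`d = 0` and multiplication by `μ = E / P` permutes `(a, b, c)` cyclically, so
`(a, b, c) = a • (1, μ, μ²)` with `μ³ = 1`, i.e. `μ ∈ {1, ω, ω²}`.
-/

section CommRing

variable {R : Type*} [CommRing R]

theorem pfaffians_eq_zero_iff_cyclic (a b c d : R) :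
    ((a ^ 2 * b + b ^ 2 * c + c ^ 2 * a) * d = 0 ∧
      b * c ^ 3 - b * a ^ 3 - c * d ^ 3 = 0 ∧
      a * b ^ 3 - a * c ^ 3 - b * d ^ 3 = 0 ∧
      c * a ^ 3 - c * b ^ 3 - a * d ^ 3 = 0) ↔
    ((a ^ 2 * b + b ^ 2 * c + c ^ 2 * a) * d = 0 ∧
      c * (a * b ^ 2 + b * c ^ 2 + c * a ^ 2 - d ^ 3) = a * (a ^ 2 * b + b ^ 2 * c + c ^ 2 * a) ∧
      b * (a * b ^ 2 + b * c ^ 2 + c * a ^ 2 - d ^ 3) = c * (a ^ 2 * b + b ^ 2 * c + c ^ 2 * a) ∧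
      a * (a * b ^ 2 + b * c ^ 2 + c * a ^ 2 - d ^ 3) = b * (a ^ 2 * b + b ^ 2 * c + c ^ 2 * a)) := by
  refine and_congr Iff.rfl (and_congr ?_ (and_congr ?_ ?_)) <;>
    constructor <;> intro h <;> linear_combination h

theorem eq_one_or_eq_or_eq_sq_of_pow_three_eq_one [IsDomain R] {ω x : R}
    (hω : ω ^ 2 + ω + 1 = 0) (hx : x ^ 3 = 1) : x = 1 ∨ x = ω ∨ x = ω ^ 2 := by
  have h : (x - 1) * ((x - ω) * (x - ω ^ 2)) = 0 := by
    linear_combination hx - (x - 1) * x * hω + (x - 1) * (ω - 1) * hω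
  simpa only [mul_eq_zero, sub_eq_zero] using h

end CommRing

section Field

variable {K : Type*} [Field K]

theorem exists_pow_three_eq_one_of_cyclic {a b c e p : K} (ha : a ≠ 0) (hp : p ≠ 0)
    (hca : c * e = a * p) (hbc : b * e = c * p) (hab : a * e = b * p) :
    ∃ μ : K, μ ^ 3 = 1 ∧ b = a * μ ∧ c = a * μ ^ 2 := by
  obtain ⟨μ, rfl⟩ : ∃ μ, e = μ * p := ⟨e / p, (div_mul_cancel₀ e hp).symm⟩
  have hca' : c * μ = a := mul_right_cancel₀ hp (by linear_combination hca)
  have hbc' : b * μ = c := mul_right_cancel₀ hp (by linear_combination hbc)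
  have hab' : a * μ = b := mul_right_cancel₀ hp (by linear_combination hab)
  refine ⟨μ, mul_left_cancel₀ ha ?_, hab'.symm, by linear_combination -hbc' - μ * hab'⟩
  linear_combination μ ^ 2 * hab' + μ * hbc' + hca'

theorem pfaffians_eq_zero_iff (a b c d : K) :
    ((a ^ 2 * b + b ^ 2 * c + c ^ 2 * a) * d = 0 ∧
      b * c ^ 3 - b * a ^ 3 - c * d ^ 3 = 0 ∧
      a * b ^ 3 - a * c ^ 3 - b * d ^ 3 = 0 ∧
      c * a ^ 3 - c * b ^ 3 - a * d ^ 3 = 0) ↔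
    ((a ^ 2 * b + b ^ 2 * c + c ^ 2 * a = 0 ∧ a * b ^ 2 + b * c ^ 2 + c * a ^ 2 = d ^ 3) ∨
      (∃ t : K, (a, b, c, d) = (0, 0, 0, t)) ∨
      ∃ t μ : K, μ ^ 3 = 1 ∧ (a, b, c, d) = (t, t * μ, t * μ ^ 2, 0)) := by
  rw [pfaffians_eq_zero_iff_cyclic]
  constructor
  · rintro ⟨hPd, hca, hbc, hab⟩
    by_cases hP : a ^ 2 * b + b ^ 2 * c + c ^ 2 * a = 0
    · rw [hP, mul_zero] at hca hbc hab
      by_cases hE : a * b ^ 2 + b * c ^ 2 + c * a ^ 2 - d ^ 3 = 0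
      · exact Or.inl ⟨hP, sub_eq_zero.mp hE⟩
      · have ha := (mul_eq_zero.mp hab).resolve_right hE
        have hb := (mul_eq_zero.mp hbc).resolve_right hE
        have hc := (mul_eq_zero.mp hca).resolve_right hE
        exact Or.inr (Or.inl ⟨d, by rw [ha, hb, hc]⟩)
    · have hd : d = 0 := (mul_eq_zero.mp hPd).resolve_left hP
      have ha : a ≠ 0 := by
        rintro rfl
        have hb : b = 0 := (mul_eq_zero.mp (hab.symm.trans (zero_mul _))).resolve_right hP
        exact hP (by rw [hb]; ring)
      obtain ⟨μ, hμ, hb, hc⟩ := exists_pow_three_eq_one_of_cyclic ha hP hca hbc hab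
      exact Or.inr (Or.inr ⟨a, μ, hμ, by rw [hb, hc, hd]⟩)
  · rintro (⟨hP, hS⟩ | ⟨t, ht⟩ | ⟨t, μ, hμ, ht⟩)
    · simp only [hP, sub_eq_zero.mpr hS, mul_zero, zero_mul, and_self]
    · simp only [Prod.mk.injEq] at ht
      obtain ⟨rfl, rfl, rfl, rfl⟩ := ht
      exact ⟨by ring, by ring, by ring, by ring⟩
    · simp only [Prod.mk.injEq] at ht
      obtain ⟨rfl, rfl, rfl, rfl⟩ := ht
      exact ⟨by ring, by linear_combination a ^ 4 * μ * (μ ^ 3 + 1) * hμ,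
        by linear_combination -a ^ 4 * μ ^ 3 * hμ, by linear_combination -a ^ 4 * μ ^ 2 * hμ⟩

end Field

theorem stmt8_general (K : Type*) [Field K]
    (ω : K) (hω : ω ^ 2 + ω + 1 = 0)
    (a b c d : K) :
    ((a ^ 2 * b + b ^ 2 * c + c ^ 2 * a) * d = 0 ∧
     b * c ^ 3 - b * a ^ 3 - c * d ^ 3 = 0 ∧
     a * b ^ 3 - a * c ^ 3 - b * d ^ 3 = 0 ∧
     c * a ^ 3 - c * b ^ 3 - a * d ^ 3 = 0) ↔
    ((a ^ 2 * b + b ^ 2 * c + c ^ 2 * a = 0 ∧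
      a * b ^ 2 + b * c ^ 2 + c * a ^ 2 = d ^ 3) ∨
     (∃ t : K,
       (a, b, c, d) = (0, 0, 0, t) ∨
       (a, b, c, d) = (t, t, t, 0) ∨
       (a, b, c, d) = (t, t * ω, t * ω ^ 2, 0) ∨
       (a, b, c, d) = (t, t * ω ^ 2, t * ω, 0))) := by
  have hω3 : ω ^ 3 = 1 := by linear_combination (ω - 1) * hω
  have hω4 : (ω ^ 2) ^ 2 = ω := by linear_combination ω * hω3
  rw [pfaffians_eq_zero_iff]
  refine or_congr_right ⟨?_, ?_⟩
  · rintro (⟨t, ht⟩ | ⟨t, μ, hμ, ht⟩)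
    · exact ⟨t, Or.inl ht⟩
    · refine ⟨t, Or.inr ?_⟩
      rcases eq_one_or_eq_or_eq_sq_of_pow_three_eq_one hω hμ with rfl | rfl | rfl
      · simpa using Or.inl ht
      · exact Or.inr (Or.inl ht)
      · exact Or.inr (Or.inr (by rwa [hω4] at ht))
  · rintro ⟨t, ht | ht | ht | ht⟩
    · exact Or.inl ⟨t, ht⟩
    · exact Or.inr ⟨t, 1, one_pow 3, by simpa using ht⟩
    · exact Or.inr ⟨t, ω, hω3, ht⟩
    · exact Or.inr ⟨t, ω ^ 2, by rw [← pow_mul, pow_mul', hω3, one_pow], by rwa [hω4]⟩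

/-- The variety Z(9), cut out by the 4×4 Pfaffians, is the union of the curve
X(9) = {a²b+b²c+c²a = 0, ab²+bc²+ca² = d³} and the four isolated points
(0:0:0:1), (1:1:1:0), (1:ω:ω²:0), (1:ω²:ω:0). -/
theorem stmt8 (K : Type*) [Field K] [IsAlgClosed K] [CharZero K]
    (ω : K) (hω : ω ^ 2 + ω + 1 = 0)
    (a b c d : K) (h : (a, b, c, d) ≠ (0, 0, 0, 0)) :
    ((a ^ 2 * b + b ^ 2 * c + c ^ 2 * a) * d = 0 ∧
     b * c ^ 3 - b * a ^ 3 - c * d ^ 3 = 0 ∧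
     a * b ^ 3 - a * c ^ 3 - b * d ^ 3 = 0 ∧
     c * a ^ 3 - c * b ^ 3 - a * d ^ 3 = 0) ↔
    ((a ^ 2 * b + b ^ 2 * c + c ^ 2 * a = 0 ∧
      a * b ^ 2 + b * c ^ 2 + c * a ^ 2 = d ^ 3) ∨
     (∃ t : K,
       (a, b, c, d) = (0, 0, 0, t) ∨
       (a, b, c, d) = (t, t, t, 0) ∨
       (a, b, c, d) = (t, t * ω, t * ω ^ 2, 0) ∨
       (a, b, c, d) = (t, t * ω ^ 2, t * ω, 0))) :=
  stmt8_general K ω hω a b c d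
end

section
/- In the polynomial ring ℚ[r,s,a,b,c,d], the determinant of the 4×4 matrix of second partial derivatives of r·F₁ + s·F₂ with respect to a,b,c,d equals 48·(r³ + s³)·s·(a³ + b³ + c³ − 3abc)·d. -/
/-!
Since d occurs in r·F₁ + s·F₂ only through −s·d³, the Hessian is block diagonal, with corner
entry −6sd and a 3×3 block 2·M(u, v, w), where u = rb + sc, v = ra + sb, w = rc + sa and
M(u, v, w) has rows (u, v, w), (v, w, u), (w, u, v). Its determinant is −N(u, v, w) for the cubic
N(x, y, z) = x³ + y³ + z³ − 3xyz, the norm form of ℚ[C₃]. As (v, u, w) are the coordinates of the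
product (r + s·g²)(a + b·g + c·g²) in ℚ[C₃] = ℚ[g]/(g³ − 1), multiplicativity of the norm gives
N(u, v, w) = N(r, 0, s)·N(a, b, c) = (r³ + s³)(a³ + b³ + c³ − 3abc).
-/

open MvPolynomial

noncomputable section

/-- The polynomial ring ℚ[r,s,a,b,c,d], with r = X 0, s = X 1, a,b,c,d = X 2,…,X 5. -/
abbrev R11 : Type := MvPolynomial (Fin 6) ℚ

/-- F₁ = a²b + b²c + c²a. -/
def F1 : R11 := X 2 ^ 2 * X 3 + X 3 ^ 2 * X 4 + X 4 ^ 2 * X 2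
/-- F₂ = ab² + bc² + ca² − d³. -/
def F2 : R11 := X 2 * X 3 ^ 2 + X 3 * X 4 ^ 2 + X 4 * X 2 ^ 2 - X 5 ^ 3

/-- The inclusion of the four variables a,b,c,d among the six variables. -/
def vr (i : Fin 4) : Fin 6 := ⟨i.1 + 2, by omega⟩

/-- The 4×4 Hessian matrix with respect to a,b,c,d only. -/
def hessABCD (p : R11) : Matrix (Fin 4) (Fin 4) R11 :=
  Matrix.of fun i j => pderiv (vr i) (pderiv (vr j) p)

@[simp]
theorem MvPolynomial.pderiv_ofNat {σ R : Type*} [CommSemiring R] (i : σ) (n : ℕ) [n.AtLeastTwo] :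
    pderiv i (no_index (OfNat.ofNat n : MvPolynomial σ R)) = 0 := by
  simpa only [Nat.cast_ofNat] using (pderiv i).map_natCast (A := MvPolynomial σ R) (OfNat.ofNat n)

namespace Matrix

variable {R : Type*} [CommRing R]

theorem det_succ_of_forall_castSucc_last_eq_zero {n : ℕ}
    (A : Matrix (Fin (n + 1)) (Fin (n + 1)) R) (h : ∀ i : Fin n, A i.castSucc (Fin.last n) = 0) :
    A.det = A (Fin.last n) (Fin.last n) * (A.submatrix Fin.castSucc Fin.castSucc).det := by
  rw [det_succ_column A (Fin.last n), Fin.sum_univ_castSucc]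
  simp [h, ← two_mul]

theorem det_anticirculant_fin_three (u v w : R) :
    !![u, v, w; v, w, u; w, u, v].det = -(u ^ 3 + v ^ 3 + w ^ 3 - 3 * u * v * w) := by
  rw [det_fin_three]
  simp only [of_apply, cons_val', cons_val_zero, cons_val_one, cons_val_two, empty_val',
    cons_val_fin_one, head_cons, head_fin_const, tail_cons]
  ring

end Matrix

theorem hessABCD_pencil :
    hessABCD (X 0 * F1 + X 1 * F2) =
      !![2 * (X 0 * X 3 + X 1 * X 4), 2 * (X 0 * X 2 + X 1 * X 3), 2 * (X 0 * X 4 + X 1 * X 2), 0;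
         2 * (X 0 * X 2 + X 1 * X 3), 2 * (X 0 * X 4 + X 1 * X 2), 2 * (X 0 * X 3 + X 1 * X 4), 0;
         2 * (X 0 * X 4 + X 1 * X 2), 2 * (X 0 * X 3 + X 1 * X 4), 2 * (X 0 * X 2 + X 1 * X 3), 0;
         0, 0, 0, -6 * X 1 * X 5] := by
  refine Matrix.ext fun i j => ?_
  fin_cases i <;> fin_cases j <;> simp [hessABCD, F1, F2, vr, pderiv_X, Pi.single_apply] <;> ring

/-- The determinant of the Hessian (with respect to a,b,c,d) of r·F₁ + s·F₂
equals 48·(r³ + s³)·s·(a³ + b³ + c³ − 3abc)·d. -/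
theorem stmt11 :
    (hessABCD (X 0 * F1 + X 1 * F2)).det =
      48 * (X 0 ^ 3 + X 1 ^ 3) * X 1 *
        (X 2 ^ 3 + X 3 ^ 3 + X 4 ^ 3 - 3 * X 2 * X 3 * X 4) * X 5 := by
  have hcol : ∀ i : Fin 3, hessABCD (X 0 * F1 + X 1 * F2) i.castSucc (Fin.last 3) = 0 := by
    intro i
    fin_cases i <;> rw [hessABCD_pencil] <;> rfl
  have hcorner : hessABCD (X 0 * F1 + X 1 * F2) (Fin.last 3) (Fin.last 3) = -6 * X 1 * X 5 := by
    rw [hessABCD_pencil]; rfl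
  have hblock : (hessABCD (X 0 * F1 + X 1 * F2)).submatrix Fin.castSucc Fin.castSucc =
      (2 : R11) • !![X 0 * X 3 + X 1 * X 4, X 0 * X 2 + X 1 * X 3, X 0 * X 4 + X 1 * X 2;
        X 0 * X 2 + X 1 * X 3, X 0 * X 4 + X 1 * X 2, X 0 * X 3 + X 1 * X 4;
        X 0 * X 4 + X 1 * X 2, X 0 * X 3 + X 1 * X 4, X 0 * X 2 + X 1 * X 3] := by
    rw [hessABCD_pencil]
    refine Matrix.ext fun i j => ?_
    fin_cases i <;> fin_cases j <;> rfl
  rw [Matrix.det_succ_of_forall_castSucc_last_eq_zero _ hcol, hcorner, hblock, Matrix.det_smul,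
    Matrix.det_anticirculant_fin_three, Fintype.card_fin]
  ring

end
end

section
/- Let K = ℚ(T) be the field of rational functions and let W be the Weierstrass curve over K given by y² + a₁xy + a₃y = x³ + a₂x², with a₁ = −(T² − T − 1), a₂ = −(T³ − T²), a₃ = −(T³ − T²), a₄ = a₆ = 0 (the universal curve over Y₁(7)). Then (0,0) is a nonsingular point of W, and in the group of points of W over K the point (0,0) has exact additive order 7 (i.e., 7·P = O and P ≠ O for P the point (0,0)). -/
noncomputable section

open WeierstrassCurve

/-- The universal curve over Y₁(7): y² + a₁xy + a₃y = x³ + a₂x² over ℚ(T), with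
a₁ = −(T² − T − 1), a₂ = a₃ = −(T³ − T²). -/
def W7 : WeierstrassCurve (RatFunc ℚ) :=
  { a₁ := -(RatFunc.X ^ 2 - RatFunc.X - 1)
    a₂ := -(RatFunc.X ^ 3 - RatFunc.X ^ 2)
    a₃ := -(RatFunc.X ^ 3 - RatFunc.X ^ 2)
    a₄ := 0
    a₆ := 0 }

/-!
`W7` is Tate's normal form `E(b, c) : y² + (1 - c)xy - by = x³ - bx²` with `b = T²(T - 1)` and
`c = T(T - 1)`. On any `E(b, c)` with `b, c ≠ 0` the chord-tangent law gives, for `P = (0, 0)`,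
`2P = (b, bc)` and `3P = (c, b - c)`; the chord through `3P` and `P` meets the curve again at a
point with `x`-coordinate `c` exactly when `b(b - c) = c³`, and then `4P = -3P`, i.e. `7P = 0`.
Here `b = cT`, so `b(b - c) = c²(T² - T) = c³`.
-/

namespace WeierstrassCurve

theorem Affine.Point.exists_some_add_some_eq_some {F : Type*} [Field F] [DecidableEq F]
    {W : Affine F} {x₁ y₁ x₂ y₂ x₃ y₃ ℓ : F} (h₁ : W.Nonsingular x₁ y₁)
    (h₂ : W.Nonsingular x₂ y₂) (hxy : ¬(x₁ = x₂ ∧ y₁ = W.negY x₂ y₂))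
    (hℓ : W.slope x₁ x₂ y₁ y₂ = ℓ) (hx : W.addX x₁ x₂ ℓ = x₃) (hy : W.addY x₁ x₂ y₁ ℓ = y₃) :
    ∃ h₃ : W.Nonsingular x₃ y₃, Point.some _ _ h₁ + Point.some _ _ h₂ = Point.some _ _ h₃ := by
  subst hℓ hx hy
  exact ⟨_, Point.add_some hxy⟩

def tateNormalForm {R : Type*} [CommRing R] (b c : R) : WeierstrassCurve R :=
  { a₁ := 1 - c, a₂ := -b, a₃ := -b, a₄ := 0, a₆ := 0 }

theorem tateNormalForm_nonsingular_zero_zero {R : Type*} [CommRing R] {b : R} (c : R)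
    (hb : b ≠ 0) : (tateNormalForm b c).toAffine.Nonsingular 0 0 := by
  rw [Affine.nonsingular_iff']
  simp [tateNormalForm, Affine.equation_iff', hb]

namespace tateNormalForm

open WeierstrassCurve.Affine WeierstrassCurve.Affine.Point

variable {F : Type*} [Field F] [DecidableEq F] {b c : F} (hb : b ≠ 0)

include hb

theorem exists_two_nsmul_eq_some :
    ∃ h : (tateNormalForm b c).toAffine.Nonsingular b (b * c),
      2 • some _ _ (tateNormalForm_nonsingular_zero_zero c hb) = some _ _ h := by
  have hy : (0 : F) ≠ (tateNormalForm b c).toAffine.negY 0 0 := by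
    simpa [negY, tateNormalForm] using hb.symm
  have hℓ : (tateNormalForm b c).toAffine.slope 0 0 0 0 = 0 := by
    rw [slope_of_Y_ne rfl hy]
    simp [tateNormalForm]
  rw [two_nsmul]
  refine exists_some_add_some_eq_some _ _ (fun h => hy h.2) hℓ ?_ ?_ <;>
    simp only [addX, addY, negAddY, negY, tateNormalForm] <;> ring

theorem exists_three_nsmul_eq_some :
    ∃ h : (tateNormalForm b c).toAffine.Nonsingular c (b - c),
      3 • some _ _ (tateNormalForm_nonsingular_zero_zero c hb) = some _ _ h := by
  obtain ⟨h₂, e₂⟩ := exists_two_nsmul_eq_some (c := c) hb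
  have hℓ : (tateNormalForm b c).toAffine.slope b 0 (b * c) 0 = c := by
    rw [slope_of_X_ne hb, sub_zero, sub_zero, mul_div_cancel_left₀ c hb]
  rw [succ_nsmul, e₂]
  refine exists_some_add_some_eq_some _ _ (fun h => hb h.1) hℓ ?_ ?_ <;>
    simp only [addX, addY, negAddY, negY, tateNormalForm] <;> ring

theorem some_add_eq_neg (hc : c ≠ 0) (hbc : b * (b - c) = c ^ 3)
    (h₃ : (tateNormalForm b c).toAffine.Nonsingular c (b - c)) :
    some _ _ h₃ + some _ _ (tateNormalForm_nonsingular_zero_zero c hb) = -some _ _ h₃ := by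
  have hℓ : (tateNormalForm b c).toAffine.slope c 0 (b - c) 0 = (b - c) / c := by
    rw [slope_of_X_ne hc, sub_zero, sub_zero]
  have hx : (tateNormalForm b c).toAffine.addX c 0 ((b - c) / c) = c := by
    simp only [addX, tateNormalForm]
    field_simp
    linear_combination hbc
  have hy : (tateNormalForm b c).toAffine.addY c 0 (b - c) ((b - c) / c) =
      (tateNormalForm b c).toAffine.negY c (b - c) := by
    rw [addY, negAddY, hx, sub_self, mul_zero, zero_add]
  exact (exists_some_add_some_eq_some h₃ _ (fun h => hc h.1) hℓ hx hy).choose_spec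

theorem seven_nsmul (hc : c ≠ 0) (hbc : b * (b - c) = c ^ 3) :
    7 • some _ _ (tateNormalForm_nonsingular_zero_zero c hb) = 0 := by
  set P := some _ _ (tateNormalForm_nonsingular_zero_zero c hb)
  obtain ⟨h₃, e₃⟩ := exists_three_nsmul_eq_some (c := c) hb
  have e₄ : 3 • P + P = -(3 • P) := by
    rw [e₃]
    exact some_add_eq_neg hb hc hbc h₃
  calc 7 • P = (3 • P + P) + 3 • P := by module
    _ = 0 := by rw [e₄, neg_add_cancel]

end tateNormalForm

end WeierstrassCurve

theorem W7_eq_tateNormalForm :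
    W7 = tateNormalForm (RatFunc.X ^ 2 * (RatFunc.X - 1)) (RatFunc.X * (RatFunc.X - 1)) := by
  ext <;> simp only [W7, tateNormalForm] <;> ring

open scoped Classical in
/-- (0,0) is a nonsingular point of the universal curve over Y₁(7), and in the
group of points over ℚ(T) it has exact additive order 7. -/
theorem stmt17 :
    ∃ h : W7.toAffine.Nonsingular 0 0,
      7 • (WeierstrassCurve.Affine.Point.some _ _ h) = 0 ∧
        WeierstrassCurve.Affine.Point.some _ _ h ≠ 0 := by
  have hX : (RatFunc.X : RatFunc ℚ) ≠ 0 := RatFunc.X_ne_zero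
  have hX₁ : (RatFunc.X : RatFunc ℚ) - 1 ≠ 0 :=
    sub_ne_zero.mpr fun h => by simpa using congrArg RatFunc.intDegree h
  rw [W7_eq_tateNormalForm]
  exact ⟨_, tateNormalForm.seven_nsmul (mul_ne_zero (pow_ne_zero 2 hX) hX₁)
    (mul_ne_zero hX hX₁) (by ring), Affine.Point.some_ne_zero _⟩

end
end
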